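/- arXiv:1110.3036 — 4 statements merged into one kernel-verified Lean document; each statement's English description precedes it below -/
import Mathlib

section
/- Let μ, ν be Borel probability measures on ℝ^d with finite second moments and mean 0. The product coupling μ × ν is an optimal coupling for the L²-Wasserstein distance (i.e., W₂(μ,ν)² = ∫∫|x-y|² dμ(x)dν(y)) if and only if W₂(μ,ν)² = W₂(δ_0,μ)² + W₂(δ_0,ν)². -/
/-! For each fixed `x`, expanding `‖x - y‖² = ‖x‖² - 2⟪x, y⟫ + ‖y‖²`
and integrating in `y` kills the cross term, so `∫ ‖x - y‖² dν(y) = ‖x‖² + ∫ ‖y‖² dν`.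
Tonelli then gives `∫∫ ‖x - y‖² d(μ × ν) = ∫ ‖x‖² dμ + ∫ ‖y‖² dν`, and the equivalence reduces
to the symmetry of equality. -/

open MeasureTheory Real ENNReal

noncomputable section

abbrev Euc (d : ℕ) := EuclideanSpace ℝ (Fin d)

/-- Topological support of a measure. -/
def msupp {α : Type*} [TopologicalSpace α] [MeasurableSpace α] (μ : Measure α) : Set α :=
  {x | ∀ U : Set α, IsOpen U → x ∈ U → 0 < μ U}

/-- Couplings of two measures. -/
def Couplings {α : Type*} [MeasurableSpace α] (μ ν : Measure α) : Set (Measure (α × α)) :=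
  {σ | σ.map Prod.fst = μ ∧ σ.map Prod.snd = ν}

/-- Squared L²-Wasserstein distance. -/
def W2sq {α : Type*} [MeasurableSpace α] [NormedAddCommGroup α] (μ ν : Measure α) : ℝ≥0∞ :=
  ⨅ σ ∈ Couplings μ ν, ∫⁻ p : α × α, ENNReal.ofReal (‖p.1 - p.2‖ ^ 2) ∂σ

open scoped InnerProductSpace

section SecondMoment

variable {E : Type*} [NormedAddCommGroup E] [MeasurableSpace E] [BorelSpace E]
  [SecondCountableTopology E]

theorem integrable_id_of_integrable_norm_sq {ν : Measure E} [IsFiniteMeasure ν]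
    (hν : Integrable (fun y => ‖y‖ ^ 2) ν) : Integrable (fun y => y) ν :=
  ((memLp_two_iff_integrable_sq_norm aestronglyMeasurable_id).2 hν).integrable one_le_two

variable [InnerProductSpace ℝ E]

theorem integrable_norm_sub_sq {ν : Measure E} [IsFiniteMeasure ν]
    (hν : Integrable (fun y => ‖y‖ ^ 2) ν) (x : E) : Integrable (fun y => ‖x - y‖ ^ 2) ν := by
  have hcross : Integrable (fun y => 2 * ⟪x, y⟫_ℝ) ν :=
    ((integrable_id_of_integrable_norm_sq hν).const_inner x).const_mul 2
  simp_rw [norm_sub_sq_real]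
  exact ((integrable_const _).sub hcross).add hν

variable [CompleteSpace E] {ν : Measure E} [IsProbabilityMeasure ν]

theorem integral_norm_sub_sq_of_integral_eq_zero (hν : Integrable (fun y => ‖y‖ ^ 2) ν)
    (hmν : ∫ y, y ∂ν = 0) (x : E) : ∫ y, ‖x - y‖ ^ 2 ∂ν = ‖x‖ ^ 2 + ∫ y, ‖y‖ ^ 2 ∂ν := by
  have hid := integrable_id_of_integrable_norm_sq hν
  have hcross : Integrable (fun y => 2 * ⟪x, y⟫_ℝ) ν := (hid.const_inner x).const_mul 2
  have hfirst : Integrable (fun y => ‖x‖ ^ 2 - 2 * ⟪x, y⟫_ℝ) ν := (integrable_const _).sub hcross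
  simp_rw [norm_sub_sq_real]
  rw [integral_add hfirst hν,
    integral_sub (integrable_const _) hcross, integral_const_mul, integral_inner hid, hmν]
  simp

theorem lintegral_norm_sub_sq_prod_of_integral_eq_zero {μ : Measure E} [IsProbabilityMeasure μ]
    (hμ : Integrable (fun x => ‖x‖ ^ 2) μ) (hν : Integrable (fun y => ‖y‖ ^ 2) ν)
    (hmν : ∫ y, y ∂ν = 0) :
    ∫⁻ p : E × E, ENNReal.ofReal (‖p.1 - p.2‖ ^ 2) ∂(μ.prod ν)
      = ENNReal.ofReal ((∫ x, ‖x‖ ^ 2 ∂μ) + ∫ y, ‖y‖ ^ 2 ∂ν) := by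
  have hfibre (x : E) : ∫⁻ y, ENNReal.ofReal (‖x - y‖ ^ 2) ∂ν
      = ENNReal.ofReal (‖x‖ ^ 2 + ∫ y, ‖y‖ ^ 2 ∂ν) := by
    rw [← integral_norm_sub_sq_of_integral_eq_zero hν hmν x,
      ofReal_integral_eq_lintegral_ofReal (integrable_norm_sub_sq hν x)
        (ae_of_all _ fun _ => by positivity)]
  have hsum : Integrable (fun x => ‖x‖ ^ 2 + ∫ y, ‖y‖ ^ 2 ∂ν) μ := hμ.add (integrable_const _)
  rw [lintegral_prod _ (by fun_prop), lintegral_congr fun x => hfibre x,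
    ← ofReal_integral_eq_lintegral_ofReal hsum (ae_of_all _ fun _ => by positivity),
    integral_add hμ (integrable_const _)]
  simp

end SecondMoment

theorem stmt3_general {d : ℕ} (μ ν : Measure (Euc d)) [IsProbabilityMeasure μ] [IsProbabilityMeasure ν]
    (hμ : Integrable (fun x => ‖x‖ ^ 2) μ) (hν : Integrable (fun y => ‖y‖ ^ 2) ν)
    (hmν : ∫ y, y ∂ν = 0) :
    (∫⁻ p : Euc d × Euc d, ENNReal.ofReal (‖p.1 - p.2‖ ^ 2) ∂(μ.prod ν)) = W2sq μ ν ↔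
      W2sq μ ν = ENNReal.ofReal ((∫ x, ‖x‖ ^ 2 ∂μ) + ∫ y, ‖y‖ ^ 2 ∂ν) := by
  rw [lintegral_norm_sub_sq_prod_of_integral_eq_zero hμ hν hmν]
  exact eq_comm

theorem stmt3 {d : ℕ} (μ ν : Measure (Euc d)) [IsProbabilityMeasure μ] [IsProbabilityMeasure ν]
    (hμ : Integrable (fun x => ‖x‖ ^ 2) μ) (hν : Integrable (fun y => ‖y‖ ^ 2) ν)
    (hmμ : ∫ x, x ∂μ = 0) (hmν : ∫ y, y ∂ν = 0) :
    (∫⁻ p : Euc d × Euc d, ENNReal.ofReal (‖p.1 - p.2‖ ^ 2) ∂(μ.prod ν)) = W2sq μ ν ↔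
      W2sq μ ν = ENNReal.ofReal ((∫ x, ‖x‖ ^ 2 ∂μ) + ∫ y, ‖y‖ ^ 2 ∂ν) :=
  stmt3_general μ ν hμ hν hmν

end
end

section
/- Let μ, ν be Borel probability measures on ℝ^d with finite second moments, neither equal to δ_0, and let θ(μ,ν) ∈ [0,π/2] be the smallest principal angle between span(supp(μ)) and span(supp(ν)), defined by cos θ(μ,ν) = max{ ⟨x,y⟩/(|x||y|) : 0 ≠ x ∈ span(supp(μ)), 0 ≠ y ∈ span(supp(ν)) } (taking θ = π/2 when the max of the cosine is ≤ 0). Then W₂(μ,ν)² ≥ W₂(δ_0,μ)² + W₂(δ_0,ν)² - 2 cos(θ(μ,ν)) · W₂(δ_0,μ) · W₂(δ_0,ν). -/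
open MeasureTheory Real ENNReal

noncomputable section

/-!
Every coupling `σ` of `μ` and `ν` is concentrated on `span (supp μ) × span (supp ν)`, where
`⟪x, y⟫ ≤ cos θ ‖x‖ ‖y‖`. Hence `‖x - y‖² ≥ ‖x‖² + ‖y‖² - 2 cos θ ‖x‖ ‖y‖` holds `σ`-a.e.;
integrating and bounding `∫ ‖x‖ ‖y‖ dσ` by Cauchy–Schwarz in `L²(σ)` gives the bound for the
cost of every coupling, hence for their infimum.
-/

lemma msupp_eq_support {α : Type*} [TopologicalSpace α] [MeasurableSpace α] (μ : Measure α) :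
    msupp μ = μ.support := by
  ext x
  simp only [msupp, Measure.support_eq_forall_isOpen, Set.mem_ofPred_eq]
  exact forall_congr' fun _ => forall_comm

lemma ae_mem_msupp {α : Type*} [TopologicalSpace α] [HereditarilyLindelofSpace α]
    [MeasurableSpace α] (μ : Measure α) : ∀ᵐ x ∂μ, x ∈ msupp μ := by
  rw [msupp_eq_support]
  exact Measure.support_mem_ae

lemma prod_mem_couplings {α : Type*} [MeasurableSpace α] (μ ν : Measure α)
    [IsProbabilityMeasure μ] [IsProbabilityMeasure ν] : μ.prod ν ∈ Couplings μ ν := by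
  constructor <;> simp

lemma integral_mul_le_sqrt_mul_sqrt {α : Type*} [MeasurableSpace α] {σ : Measure α}
    {f g : α → ℝ} (hf0 : 0 ≤ᵐ[σ] f) (hg0 : 0 ≤ᵐ[σ] g) (hf : MemLp f 2 σ) (hg : MemLp g 2 σ) :
    ∫ a, f a * g a ∂σ ≤ √(∫ a, f a ^ 2 ∂σ) * √(∫ a, g a ^ 2 ∂σ) := by
  have h := integral_mul_le_Lp_mul_Lq_of_nonneg Real.HolderConjugate.two_two hf0 hg0
    (by simpa using hf) (by simpa using hg)
  simpa only [Real.rpow_two, ← Real.sqrt_eq_rpow] using h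

section Normed

variable {E : Type*} [NormedAddCommGroup E] [MeasurableSpace E] [BorelSpace E]
  [SecondCountableTopology E]

lemma integrable_norm_sub_sq_s8 {σ : Measure (E × E)}
    (h₁ : Integrable (fun p => ‖p.1‖ ^ 2) σ) (h₂ : Integrable (fun p => ‖p.2‖ ^ 2) σ) :
    Integrable (fun p => ‖p.1 - p.2‖ ^ 2) σ := by
  refine ((h₁.add h₂).const_mul 2).mono' (by fun_prop) (ae_of_all _ fun p => ?_)
  rw [Real.norm_of_nonneg (by positivity), Pi.add_apply]
  nlinarith [norm_sub_le p.1 p.2, norm_nonneg (p.1 - p.2), sq_nonneg (‖p.1‖ - ‖p.2‖)]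

lemma W2sq_ne_top (μ ν : Measure E) [IsProbabilityMeasure μ] [IsProbabilityMeasure ν]
    (hμ : Integrable (fun x => ‖x‖ ^ 2) μ) (hν : Integrable (fun y => ‖y‖ ^ 2) ν) :
    W2sq μ ν ≠ ⊤ :=
  ne_top_of_le_ne_top
    (integrable_norm_sub_sq_s8 (hμ.comp_fst ν) (hν.comp_snd μ)).lintegral_lt_top.ne
    (iInf₂_le _ (prod_mem_couplings μ ν))

end Normed

section InnerProductSpace

variable {E : Type*} [NormedAddCommGroup E] [InnerProductSpace ℝ E]

def maxCosine (V W : Submodule ℝ E) : ℝ :=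
  sSup {r : ℝ | ∃ x ∈ V, ∃ y ∈ W, x ≠ 0 ∧ y ≠ 0 ∧ r = inner ℝ x y / (‖x‖ * ‖y‖)}

lemma real_inner_le_max_zero_maxCosine_mul {V W : Submodule ℝ E} {x y : E} (hx : x ∈ V)
    (hy : y ∈ W) : inner ℝ x y ≤ max 0 (maxCosine V W) * (‖x‖ * ‖y‖) := by
  rcases eq_or_ne x 0 with rfl | hx0
  · simp
  rcases eq_or_ne y 0 with rfl | hy0
  · simp
  have hxy : 0 < ‖x‖ * ‖y‖ := by positivity
  have hbdd : BddAbove {r : ℝ | ∃ x ∈ V, ∃ y ∈ W, x ≠ 0 ∧ y ≠ 0 ∧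
      r = inner ℝ x y / (‖x‖ * ‖y‖)} := by
    refine ⟨1, ?_⟩
    rintro r ⟨x, -, y, -, -, -, rfl⟩
    exact (abs_le.mp (abs_real_inner_div_norm_mul_norm_le_one x y)).2
  have hle : inner ℝ x y / (‖x‖ * ‖y‖) ≤ maxCosine V W :=
    le_csSup hbdd ⟨x, hx, y, hy, hx0, hy0, rfl⟩
  rw [div_le_iff₀ hxy] at hle
  exact hle.trans (mul_le_mul_of_nonneg_right (le_max_right _ _) hxy.le)

variable [MeasurableSpace E] [BorelSpace E] [SecondCountableTopology E]

lemma integral_norm_sub_sq_ge {σ : Measure (E × E)} {c : ℝ} (hc : 0 ≤ c)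
    (h₁ : Integrable (fun p => ‖p.1‖ ^ 2) σ) (h₂ : Integrable (fun p => ‖p.2‖ ^ 2) σ)
    (hinner : ∀ᵐ p ∂σ, inner ℝ p.1 p.2 ≤ c * (‖p.1‖ * ‖p.2‖)) :
    (∫ p, ‖p.1‖ ^ 2 ∂σ) + (∫ p, ‖p.2‖ ^ 2 ∂σ)
        - 2 * c * √(∫ p, ‖p.1‖ ^ 2 ∂σ) * √(∫ p, ‖p.2‖ ^ 2 ∂σ)
      ≤ ∫ p, ‖p.1 - p.2‖ ^ 2 ∂σ := by
  have m₁ : MemLp (fun p : E × E => ‖p.1‖) 2 σ :=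
    (memLp_two_iff_integrable_sq (by fun_prop)).mpr h₁
  have m₂ : MemLp (fun p : E × E => ‖p.2‖) 2 σ :=
    (memLp_two_iff_integrable_sq (by fun_prop)).mpr h₂
  have hsum : Integrable (fun p : E × E => ‖p.1‖ ^ 2 + ‖p.2‖ ^ 2) σ := h₁.add h₂
  have hprod : Integrable (fun p : E × E => ‖p.1‖ * ‖p.2‖) σ := m₁.integrable_mul m₂
  have hCS := integral_mul_le_sqrt_mul_sqrt (ae_of_all _ fun p : E × E => norm_nonneg p.1)
    (ae_of_all _ fun p : E × E => norm_nonneg p.2) m₁ m₂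
  calc (∫ p, ‖p.1‖ ^ 2 ∂σ) + (∫ p, ‖p.2‖ ^ 2 ∂σ)
        - 2 * c * √(∫ p, ‖p.1‖ ^ 2 ∂σ) * √(∫ p, ‖p.2‖ ^ 2 ∂σ)
      ≤ ∫ p, (‖p.1‖ ^ 2 + ‖p.2‖ ^ 2 - 2 * c * (‖p.1‖ * ‖p.2‖)) ∂σ := by
        rw [integral_sub hsum (hprod.const_mul _), integral_add h₁ h₂,
          integral_const_mul]
        linarith [mul_le_mul_of_nonneg_left hCS (by positivity : 0 ≤ 2 * c)]
    _ ≤ ∫ p, ‖p.1 - p.2‖ ^ 2 ∂σ := by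
        refine integral_mono_ae (hsum.sub (hprod.const_mul _))
          (integrable_norm_sub_sq_s8 h₁ h₂) ?_
        filter_upwards [hinner] with p hp
        rw [norm_sub_sq_real]
        linarith

lemma ofReal_le_lintegral_of_mem_couplings {μ ν : Measure E} {σ : Measure (E × E)}
    (hσ : σ ∈ Couplings μ ν)
    (hμ : Integrable (fun x => ‖x‖ ^ 2) μ) (hν : Integrable (fun y => ‖y‖ ^ 2) ν)
    {V W : Set E} {c : ℝ} (hc : 0 ≤ c) (hμV : ∀ᵐ x ∂μ, x ∈ V) (hνW : ∀ᵐ y ∂ν, y ∈ W)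
    (hVW : ∀ x ∈ V, ∀ y ∈ W, inner ℝ x y ≤ c * (‖x‖ * ‖y‖)) :
    ENNReal.ofReal ((∫ x, ‖x‖ ^ 2 ∂μ) + (∫ y, ‖y‖ ^ 2 ∂ν)
        - 2 * c * √(∫ x, ‖x‖ ^ 2 ∂μ) * √(∫ y, ‖y‖ ^ 2 ∂ν))
      ≤ ∫⁻ p, ENNReal.ofReal (‖p.1 - p.2‖ ^ 2) ∂σ := by
  obtain ⟨rfl, rfl⟩ := hσ
  have h₁ : Integrable (fun p : E × E => ‖p.1‖ ^ 2) σ := hμ.comp_measurable measurable_fst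
  have h₂ : Integrable (fun p : E × E => ‖p.2‖ ^ 2) σ := hν.comp_measurable measurable_snd
  have hV : ∀ᵐ p ∂σ, p.1 ∈ V := ae_of_ae_map measurable_fst.aemeasurable hμV
  have hW : ∀ᵐ p ∂σ, p.2 ∈ W := ae_of_ae_map measurable_snd.aemeasurable hνW
  rw [integral_map measurable_fst.aemeasurable hμ.aestronglyMeasurable,
    integral_map measurable_snd.aemeasurable hν.aestronglyMeasurable,
    ← ofReal_integral_eq_lintegral_ofReal (integrable_norm_sub_sq_s8 h₁ h₂)
      (ae_of_all _ fun _ => by positivity)]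
  exact ENNReal.ofReal_le_ofReal <| integral_norm_sub_sq_ge hc h₁ h₂ <| by
    filter_upwards [hV, hW] with p hp₁ hp₂ using hVW _ hp₁ _ hp₂

lemma sub_two_mul_sqrt_le_toReal_W2sq {μ ν : Measure E} [IsProbabilityMeasure μ]
    [IsProbabilityMeasure ν]
    (hμ : Integrable (fun x => ‖x‖ ^ 2) μ) (hν : Integrable (fun y => ‖y‖ ^ 2) ν)
    {V W : Set E} {c : ℝ} (hc : 0 ≤ c) (hμV : ∀ᵐ x ∂μ, x ∈ V) (hνW : ∀ᵐ y ∂ν, y ∈ W)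
    (hVW : ∀ x ∈ V, ∀ y ∈ W, inner ℝ x y ≤ c * (‖x‖ * ‖y‖)) :
    (∫ x, ‖x‖ ^ 2 ∂μ) + (∫ y, ‖y‖ ^ 2 ∂ν) - 2 * c * √(∫ x, ‖x‖ ^ 2 ∂μ) * √(∫ y, ‖y‖ ^ 2 ∂ν)
      ≤ (W2sq μ ν).toReal :=
  (ENNReal.ofReal_le_iff_le_toReal (W2sq_ne_top μ ν hμ hν)).mp <| le_iInf₂ fun _ hσ =>
    ofReal_le_lintegral_of_mem_couplings hσ hμ hν hc hμV hνW hVW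

end InnerProductSpace

theorem stmt8_general {d : ℕ} (μ ν : Measure (Euc d)) [IsProbabilityMeasure μ] [IsProbabilityMeasure ν]
    (hμ : Integrable (fun x => ‖x‖ ^ 2) μ) (hν : Integrable (fun y => ‖y‖ ^ 2) ν)
    (θ : ℝ)
    (hcos : Real.cos θ = max 0 (sSup {r : ℝ | ∃ x ∈ Submodule.span ℝ (msupp μ),
      ∃ y ∈ Submodule.span ℝ (msupp ν), x ≠ 0 ∧ y ≠ 0 ∧ r = inner ℝ x y / (‖x‖ * ‖y‖)})) :
    (W2sq μ ν).toReal ≥ (∫ x, ‖x‖ ^ 2 ∂μ) + (∫ y, ‖y‖ ^ 2 ∂ν)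
      - 2 * Real.cos θ * Real.sqrt (∫ x, ‖x‖ ^ 2 ∂μ) * Real.sqrt (∫ y, ‖y‖ ^ 2 ∂ν) := by
  change Real.cos θ = max 0 (maxCosine (Submodule.span ℝ (msupp μ)) (Submodule.span ℝ (msupp ν)))
    at hcos
  have hc : 0 ≤ Real.cos θ := by
    rw [hcos]
    exact le_max_left _ _
  refine sub_two_mul_sqrt_le_toReal_W2sq hμ hν hc
    (V := Submodule.span ℝ (msupp μ)) (W := Submodule.span ℝ (msupp ν))
    ((ae_mem_msupp μ).mono fun _ hx => Submodule.subset_span hx)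
    ((ae_mem_msupp ν).mono fun _ hy => Submodule.subset_span hy) fun x hx y hy => ?_
  rw [hcos]
  exact real_inner_le_max_zero_maxCosine_mul hx hy

theorem stmt8 {d : ℕ} (μ ν : Measure (Euc d)) [IsProbabilityMeasure μ] [IsProbabilityMeasure ν]
    (hμ : Integrable (fun x => ‖x‖ ^ 2) μ) (hν : Integrable (fun y => ‖y‖ ^ 2) ν)
    (hμ0 : μ ≠ Measure.dirac 0) (hν0 : ν ≠ Measure.dirac 0)
    (θ : ℝ) (hθ : θ ∈ Set.Icc 0 (π / 2))
    (hcos : Real.cos θ = max 0 (sSup {r : ℝ | ∃ x ∈ Submodule.span ℝ (msupp μ),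
      ∃ y ∈ Submodule.span ℝ (msupp ν), x ≠ 0 ∧ y ≠ 0 ∧ r = inner ℝ x y / (‖x‖ * ‖y‖)})) :
    (W2sq μ ν).toReal ≥ (∫ x, ‖x‖ ^ 2 ∂μ) + (∫ y, ‖y‖ ^ 2 ∂ν)
      - 2 * Real.cos θ * Real.sqrt (∫ x, ‖x‖ ^ 2 ∂μ) * Real.sqrt (∫ y, ‖y‖ ^ 2 ∂ν) :=
  stmt8_general μ ν hμ hν θ hcos

end
end

section
/- For d = 1, let μ := (δ_1 + δ_{-1})/2 and, for each positive integer n, ν_n := (1 - 1/n²)δ_0 + (1/(2n²))(δ_n + δ_{-n}). Then μ and ν_n have mean 0 and unit second moment, and W₂(μ, ν_n)² = 2 - 2/n; consequently the comparison angle ∠(μ,ν_n) = arccos(1/n), which tends to π/2 as n → ∞. -/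
open MeasureTheory Real ENNReal

noncomputable section

/-!
The upper bound comes from the explicit coupling `σ_n`, which splits the atom of `ν_n` at `0`
evenly between `±1` and sends `±n` to `±1`; its cost is `(1 - 1/n²) + (n - 1)²/n² = 2 - 2/n`.
For the lower bound, `μ` lives on the unit sphere, so `|x - y| ≥ |‖y‖ - 1|` on every coupling and
the cost is at least `∫ (‖y‖ - 1)² dν_n = 2 - 2/n`.
-/

section Wasserstein

variable {α : Type*} [MeasurableSpace α] [NormedAddCommGroup α] {μ ν : Measure α}

theorem W2sq_le_lintegral_of_mem_couplings {σ : Measure (α × α)} (hσ : σ ∈ Couplings μ ν) :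
    W2sq μ ν ≤ ∫⁻ p, ENNReal.ofReal (‖p.1 - p.2‖ ^ 2) ∂σ :=
  iInf₂_le σ hσ

theorem lintegral_sq_norm_sub_le_W2sq {r : ℝ} (hμ : ∀ᵐ x ∂μ, ‖x‖ = r) :
    ∫⁻ y, ENNReal.ofReal ((‖y‖ - r) ^ 2) ∂ν ≤ W2sq μ ν := by
  refine le_iInf₂ fun σ ⟨hfst, hsnd⟩ => ?_
  have hσ : ∀ᵐ p ∂σ, ‖p.1‖ = r := ae_of_ae_map measurable_fst.aemeasurable (hfst ▸ hμ)
  calc ∫⁻ y, ENNReal.ofReal ((‖y‖ - r) ^ 2) ∂ν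
      ≤ ∫⁻ p, ENNReal.ofReal ((‖p.2‖ - r) ^ 2) ∂σ := hsnd ▸ lintegral_map_le _ _
    _ ≤ ∫⁻ p, ENNReal.ofReal (‖p.1 - p.2‖ ^ 2) ∂σ := by
      refine lintegral_mono_ae (hσ.mono fun p hp => ENNReal.ofReal_le_ofReal ?_)
      rw [← hp, ← sq_abs, norm_sub_rev]
      exact pow_le_pow_left₀ (abs_nonneg _) (abs_norm_sub_norm_le _ _) 2

end Wasserstein

section Dirac

variable {α E : Type*} [MeasurableSpace α] [MeasurableSingletonClass α] [NormedAddCommGroup E]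
  {c : ℝ≥0∞}

theorem integrable_smul_dirac (hc : c ≠ ∞) (f : α → E) (a : α) :
    Integrable f (c • Measure.dirac a) :=
  (integrable_dirac enorm_lt_top).smul_measure hc

theorem integrable_smul_dirac_add_dirac (hc : c ≠ ∞) (f : α → E) (a b : α) :
    Integrable f (c • (Measure.dirac a + Measure.dirac b)) := by
  rw [smul_add]
  exact (integrable_smul_dirac hc f a).add_measure (integrable_smul_dirac hc f b)

theorem integral_smul_dirac_add_dirac [NormedSpace ℝ E] [CompleteSpace E] (hc : c ≠ ∞)
    (f : α → E) (a b : α) :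
    ∫ x, f x ∂(c • (Measure.dirac a + Measure.dirac b)) = c.toReal • (f a + f b) := by
  rw [smul_add, integral_add_measure (integrable_smul_dirac hc f a) (integrable_smul_dirac hc f b)]
  simp only [integral_smul_measure, integral_dirac, smul_add]

end Dirac

def rademacher : Measure ℝ :=
  (2 : ℝ≥0∞)⁻¹ • Measure.dirac (1 : ℝ) + (2 : ℝ≥0∞)⁻¹ • Measure.dirac (-1 : ℝ)

def threePoint (n : ℕ) : Measure ℝ :=
  ENNReal.ofReal (1 - 1 / (n : ℝ) ^ 2) • Measure.dirac (0 : ℝ)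
    + ENNReal.ofReal (1 / (2 * (n : ℝ) ^ 2)) • (Measure.dirac (n : ℝ) + Measure.dirac (-(n : ℝ)))

def threePointCoupling (n : ℕ) : Measure (ℝ × ℝ) :=
  ENNReal.ofReal ((1 - 1 / (n : ℝ) ^ 2) / 2) • (Measure.dirac (1, 0) + Measure.dirac (-1, 0))
    + ENNReal.ofReal (1 / (2 * (n : ℝ) ^ 2)) •
      (Measure.dirac (1, (n : ℝ)) + Measure.dirac (-1, -(n : ℝ)))

theorem rademacher_eq_smul : rademacher = (2 : ℝ≥0∞)⁻¹ • (Measure.dirac 1 + Measure.dirac (-1)) :=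
  (smul_add _ _ _).symm

theorem integral_rademacher (f : ℝ → ℝ) : ∫ x, f x ∂rademacher = (f 1 + f (-1)) / 2 := by
  rw [rademacher_eq_smul, integral_smul_dirac_add_dirac (by simp)]
  simp [div_eq_inv_mul]

theorem ae_norm_rademacher : ∀ᵐ x ∂rademacher, ‖x‖ = 1 := by
  simp [rademacher, ae_add_measure_iff]

section ThreePoint

variable {n : ℕ}

theorem one_sub_one_div_sq_nonneg (hn : 0 < n) : (0 : ℝ) ≤ 1 - 1 / (n : ℝ) ^ 2 :=
  sub_nonneg.2 <| (div_le_one (by positivity)).2 (one_le_pow₀ (by exact_mod_cast hn))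

theorem integrable_threePoint (f : ℝ → ℝ) : Integrable f (threePoint n) :=
  (integrable_smul_dirac ofReal_ne_top f _).add_measure
    (integrable_smul_dirac_add_dirac ofReal_ne_top f _ _)

theorem integral_threePoint (hn : 0 < n) (f : ℝ → ℝ) :
    ∫ x, f x ∂threePoint n
      = (1 - 1 / (n : ℝ) ^ 2) * f 0 + 1 / (2 * (n : ℝ) ^ 2) * (f n + f (-n)) := by
  rw [threePoint, integral_add_measure (integrable_smul_dirac ofReal_ne_top f _)
      (integrable_smul_dirac_add_dirac ofReal_ne_top f _ _),
    integral_smul_dirac_add_dirac ofReal_ne_top, integral_smul_measure, integral_dirac,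
    toReal_ofReal (one_sub_one_div_sq_nonneg hn), toReal_ofReal (by positivity), smul_eq_mul,
    smul_eq_mul]

theorem lintegral_sq_norm_sub_one_threePoint (hn : 0 < n) :
    ∫⁻ y, ENNReal.ofReal ((‖y‖ - 1) ^ 2) ∂threePoint n = ENNReal.ofReal (2 - 2 / (n : ℝ)) := by
  rw [← ofReal_integral_eq_lintegral_ofReal (integrable_threePoint _)
    (ae_of_all _ fun _ => sq_nonneg _), integral_threePoint hn]
  simp only [norm_zero, norm_neg, Real.norm_natCast]
  congr 1
  field_simp
  ring

theorem integrable_threePointCoupling (f : ℝ × ℝ → ℝ) : Integrable f (threePointCoupling n) :=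
  (integrable_smul_dirac_add_dirac ofReal_ne_top f _ _).add_measure
    (integrable_smul_dirac_add_dirac ofReal_ne_top f _ _)

theorem integral_threePointCoupling (hn : 0 < n) (f : ℝ × ℝ → ℝ) :
    ∫ p, f p ∂threePointCoupling n
      = (1 - 1 / (n : ℝ) ^ 2) / 2 * (f (1, 0) + f (-1, 0))
        + 1 / (2 * (n : ℝ) ^ 2) * (f (1, n) + f (-1, -n)) := by
  have hw : 0 ≤ (1 - 1 / (n : ℝ) ^ 2) / 2 := div_nonneg (one_sub_one_div_sq_nonneg hn) zero_le_two
  rw [threePointCoupling,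
    integral_add_measure (integrable_smul_dirac_add_dirac ofReal_ne_top f _ _)
      (integrable_smul_dirac_add_dirac ofReal_ne_top f _ _),
    integral_smul_dirac_add_dirac ofReal_ne_top, integral_smul_dirac_add_dirac ofReal_ne_top,
    toReal_ofReal hw, toReal_ofReal (by positivity), smul_eq_mul, smul_eq_mul]

theorem lintegral_threePointCoupling (hn : 0 < n) :
    ∫⁻ p, ENNReal.ofReal (‖p.1 - p.2‖ ^ 2) ∂threePointCoupling n
      = ENNReal.ofReal (2 - 2 / (n : ℝ)) := by
  rw [← ofReal_integral_eq_lintegral_ofReal (integrable_threePointCoupling _)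
    (ae_of_all _ fun _ => sq_nonneg _), integral_threePointCoupling hn]
  congr 1
  simp only [Real.norm_eq_abs, sq_abs]
  field_simp
  ring

theorem threePointCoupling_mem_couplings (hn : 0 < n) :
    threePointCoupling n ∈ Couplings rademacher (threePoint n) := by
  have hw : 0 ≤ (1 - 1 / (n : ℝ) ^ 2) / 2 := div_nonneg (one_sub_one_div_sq_nonneg hn) zero_le_two
  constructor
  · simp only [threePointCoupling, Measure.map_add _ _ measurable_fst, Measure.map_smul,
      Measure.map_dirac' measurable_fst, ← add_smul]
    rw [← ofReal_add hw (by positivity), rademacher_eq_smul]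
    congr
    rw [show (1 - 1 / (n : ℝ) ^ 2) / 2 + 1 / (2 * (n : ℝ) ^ 2) = 2⁻¹ by field_simp; ring,
      ofReal_inv_of_pos two_pos, ofReal_ofNat]
  · simp only [threePointCoupling, Measure.map_add _ _ measurable_snd, Measure.map_smul,
      Measure.map_dirac' measurable_snd, threePoint, ← two_smul ℝ≥0∞ (Measure.dirac _)]
    rw [smul_smul, ← ofReal_ofNat 2, ← ofReal_mul hw, div_mul_cancel₀ _ two_ne_zero]

theorem W2sq_rademacher_threePoint (hn : 0 < n) :
    W2sq rademacher (threePoint n) = ENNReal.ofReal (2 - 2 / (n : ℝ)) :=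
  le_antisymm
    (lintegral_threePointCoupling hn ▸
      W2sq_le_lintegral_of_mem_couplings (threePointCoupling_mem_couplings hn))
    (lintegral_sq_norm_sub_one_threePoint hn ▸ lintegral_sq_norm_sub_le_W2sq ae_norm_rademacher)

end ThreePoint

theorem tendsto_arccos_one_div_natCast_atTop :
    Filter.Tendsto (fun m : ℕ => Real.arccos (1 / (m : ℝ))) Filter.atTop (nhds (π / 2)) :=
  arccos_zero ▸ (continuous_arccos.tendsto 0).comp tendsto_one_div_atTop_nhds_zero_nat

theorem stmt9 (n : ℕ) (hn : 0 < n) (μ νn : Measure ℝ)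
    (hμdef : μ = (2 : ℝ≥0∞)⁻¹ • Measure.dirac (1 : ℝ) + (2 : ℝ≥0∞)⁻¹ • Measure.dirac (-1 : ℝ))
    (hνdef : νn = ENNReal.ofReal (1 - 1 / (n : ℝ) ^ 2) • Measure.dirac (0 : ℝ)
      + ENNReal.ofReal (1 / (2 * (n : ℝ) ^ 2)) • (Measure.dirac (n : ℝ) + Measure.dirac (-(n : ℝ)))) :
    (∫ x, x ∂μ = 0) ∧ (∫ x, x ^ 2 ∂μ = 1) ∧ (∫ x, x ∂νn = 0) ∧ (∫ x, x ^ 2 ∂νn = 1) ∧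
    W2sq μ νn = ENNReal.ofReal (2 - 2 / (n : ℝ)) ∧
    Real.arccos ((1 + 1 - (2 - 2 / (n : ℝ))) / (2 * 1 * 1)) = Real.arccos (1 / (n : ℝ)) ∧
    Filter.Tendsto (fun m : ℕ => Real.arccos (1 / (m : ℝ))) Filter.atTop (nhds (π / 2)) := by
  obtain rfl : μ = rademacher := hμdef
  obtain rfl : νn = threePoint n := hνdef
  refine ⟨?_, ?_, ?_, ?_, W2sq_rademacher_threePoint hn, by ring_nf,
    tendsto_arccos_one_div_natCast_atTop⟩
  · rw [integral_rademacher]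
    norm_num
  · rw [integral_rademacher]
    norm_num
  · rw [integral_threePoint hn]
    ring
  · rw [integral_threePoint hn]
    field_simp
    ring

end
end

section
/- For d = 1: for any two Borel probability measures μ, ν on ℝ with finite second moments and mean 0, neither equal to δ_0, one has W₂(μ,ν)² < W₂(δ_0,μ)² + W₂(δ_0,ν)², i.e., the inequality is always strict. -/
/-! The independent coupling `μ ⊗ ν` costs exactly `∫ x² dμ + ∫ y² dν`, since both means vanish.
Changing its density to `1 + u x * v y`, with `|u|, |v| ≤ 1` and `∫ u dμ = ∫ v dν = 0`, keeps the
marginals and adds `(∫ x u dμ) (∫ y v dν)` to the correlation `∫ x y`. For `u` a centred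
increasing bounded function, such as `x / (1 + |x|)` minus its mean, `∫ x u dμ > 0` as soon as
`μ ≠ δ₀`; so this coupling costs strictly less than the sum of the second moments. -/

open MeasureTheory Real ENNReal

noncomputable section

open Set

lemma one_add_mul_nonneg_of_abs_le_one {a b : ℝ} (ha : |a| ≤ 1) (hb : |b| ≤ 1) :
    0 ≤ 1 + a * b := by
  have := (abs_le.1 (abs_mul a b ▸ mul_le_one₀ ha (abs_nonneg b) hb)).1
  linarith

section PerturbedProd

variable {α β : Type*} [MeasurableSpace α] [MeasurableSpace β]

def perturbedProd (μ : Measure α) (ν : Measure β) (u : α → ℝ) (v : β → ℝ) : Measure (α × β) :=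
  (μ.prod ν).withDensity fun p => ENNReal.ofReal (1 + u p.1 * v p.2)

lemma lintegral_ofReal_one_add_mul {ν : Measure β} [IsProbabilityMeasure ν] {v : β → ℝ}
    (hv : Measurable v) (hv1 : ∀ y, |v y| ≤ 1) (hv0 : ∫ y, v y ∂ν = 0) {a : ℝ} (ha : |a| ≤ 1) :
    ∫⁻ y, ENNReal.ofReal (1 + a * v y) ∂ν = 1 := by
  have hint : Integrable v ν := .of_bound hv.aestronglyMeasurable 1 (.of_forall hv1)
  have hint' : Integrable (fun y => 1 + a * v y) ν := (integrable_const 1).add (hint.const_mul a)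
  rw [← ofReal_integral_eq_lintegral_ofReal hint'
      (.of_forall fun y => one_add_mul_nonneg_of_abs_le_one ha (hv1 y)),
    integral_add (integrable_const 1) (hint.const_mul a), integral_const_mul, hv0]
  simp

variable {μ : Measure α} {ν : Measure β} {u : α → ℝ} {v : β → ℝ}

lemma map_fst_perturbedProd [SFinite μ] [IsProbabilityMeasure ν] (hu : Measurable u)
    (hv : Measurable v) (hu1 : ∀ x, |u x| ≤ 1) (hv1 : ∀ y, |v y| ≤ 1) (hv0 : ∫ y, v y ∂ν = 0) :
    (perturbedProd μ ν u v).map Prod.fst = μ := by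
  ext s hs
  rw [Measure.map_apply measurable_fst hs, perturbedProd, withDensity_apply _ (measurable_fst hs),
    ← prod_univ, ← Measure.prod_restrict, Measure.restrict_univ, lintegral_prod _ (by fun_prop)]
  simp [lintegral_ofReal_one_add_mul hv hv1 hv0 (hu1 _)]

lemma map_snd_perturbedProd [IsProbabilityMeasure μ] [SFinite ν] (hu : Measurable u)
    (hv : Measurable v) (hu1 : ∀ x, |u x| ≤ 1) (hv1 : ∀ y, |v y| ≤ 1) (hu0 : ∫ x, u x ∂μ = 0) :
    (perturbedProd μ ν u v).map Prod.snd = ν := by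
  ext s hs
  rw [Measure.map_apply measurable_snd hs, perturbedProd, withDensity_apply _ (measurable_snd hs),
    ← univ_prod, ← Measure.prod_restrict, Measure.restrict_univ,
    lintegral_prod_symm _ (by fun_prop)]
  simp [mul_comm (u _), lintegral_ofReal_one_add_mul hu hu1 hu0 (hv1 _)]

lemma integral_mul_perturbedProd [SFinite μ] [SFinite ν] {f : α → ℝ} {g : β → ℝ}
    (hf : Integrable f μ) (hg : Integrable g ν) (hu : Measurable u) (hv : Measurable v)
    (hu1 : ∀ x, |u x| ≤ 1) (hv1 : ∀ y, |v y| ≤ 1) :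
    ∫ p, f p.1 * g p.2 ∂perturbedProd μ ν u v
      = (∫ x, f x ∂μ) * (∫ y, g y ∂ν) + (∫ x, f x * u x ∂μ) * ∫ y, g y * v y ∂ν := by
  have hfu : Integrable (fun x => f x * u x) μ :=
    hf.mul_bdd hu.aestronglyMeasurable (.of_forall hu1)
  have hgv : Integrable (fun y => g y * v y) ν :=
    hg.mul_bdd hv.aestronglyMeasurable (.of_forall hv1)
  rw [perturbedProd, integral_withDensity_eq_integral_toReal_smul (by fun_prop)
    (.of_forall fun _ => ofReal_lt_top)]
  simp_rw [toReal_ofReal (one_add_mul_nonneg_of_abs_le_one (hu1 _) (hv1 _)), smul_eq_mul]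
  calc ∫ p, (1 + u p.1 * v p.2) * (f p.1 * g p.2) ∂μ.prod ν
      = ∫ p, f p.1 * g p.2 + (f p.1 * u p.1) * (g p.2 * v p.2) ∂μ.prod ν := by
        congr with p; ring
    _ = _ := by
      rw [integral_add (hf.mul_prod hg) (hfu.mul_prod hgv), integral_prod_mul,
        integral_prod_mul (fun x => f x * u x) (fun y => g y * v y)]

end PerturbedProd

lemma lintegral_sq_sub_eq_of_mem_couplings {μ ν : Measure ℝ} {σ : Measure (ℝ × ℝ)}
    (hσ : σ ∈ Couplings μ ν) (hμ : Integrable (fun x => x ^ 2) μ)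
    (hν : Integrable (fun y => y ^ 2) ν) :
    ∫⁻ p, ENNReal.ofReal (‖p.1 - p.2‖ ^ 2) ∂σ
      = ENNReal.ofReal ((∫ x, x ^ 2 ∂μ) + (∫ y, y ^ 2 ∂ν) - 2 * ∫ p, p.1 * p.2 ∂σ) := by
  obtain ⟨hfst, hsnd⟩ := hσ
  subst hfst hsnd
  have h1 : Integrable (fun p : ℝ × ℝ => p.1 ^ 2) σ := hμ.comp_measurable measurable_fst
  have h2 : Integrable (fun p : ℝ × ℝ => p.2 ^ 2) σ := hν.comp_measurable measurable_snd
  have hsum : Integrable (fun p : ℝ × ℝ => p.1 ^ 2 + p.2 ^ 2) σ := h1.add h2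
  have h12 : Integrable (fun p : ℝ × ℝ => 2 * (p.1 * p.2)) σ := by
    refine (hsum.mono' (by fun_prop) (.of_forall fun p => ?_)).const_mul 2
    rw [Real.norm_eq_abs, abs_mul]
    nlinarith [sq_abs p.1, sq_abs p.2, sq_nonneg (|p.1| - |p.2|)]
  have hexpand : (fun p : ℝ × ℝ => ‖p.1 - p.2‖ ^ 2)
      = fun p => p.1 ^ 2 + p.2 ^ 2 - 2 * (p.1 * p.2) := by
    ext p; rw [Real.norm_eq_abs, sq_abs]; ring
  rw [← ofReal_integral_eq_lintegral_ofReal (hexpand ▸ hsum.sub h12)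
    (.of_forall fun _ => by positivity), hexpand, integral_sub hsum h12,
    integral_add h1 h2, integral_const_mul,
    integral_map measurable_fst.aemeasurable hμ.aestronglyMeasurable,
    integral_map measurable_snd.aemeasurable hν.aestronglyMeasurable]

lemma integrable_of_integrable_sq {μ : Measure ℝ} [IsFiniteMeasure μ]
    (h : Integrable (fun x => x ^ 2) μ) : Integrable (fun x => x) μ :=
  ((memLp_two_iff_integrable_sq aestronglyMeasurable_id).2 h).integrable one_le_two

lemma integral_pos_of_ne_dirac_zero {μ : Measure ℝ} [IsProbabilityMeasure μ] {f : ℝ → ℝ}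
    (hf : Integrable f μ) (hf0 : 0 ≤ f) (hfpos : ∀ x ≠ 0, 0 < f x) (hμ0 : μ ≠ Measure.dirac 0) :
    0 < ∫ x, f x ∂μ := by
  refine (integral_nonneg hf0).lt_of_ne fun h => hμ0 ?_
  have hzero : (fun x : ℝ => x) =ᵐ[μ] fun _ => 0 :=
    ((integral_eq_zero_iff_of_nonneg hf0 hf).1 h.symm).mono fun x hx => by
      by_contra hx0
      exact (hfpos x hx0).ne' hx
  simpa using (ProbabilityTheory.hasLaw_dirac_of_ae_eq hzero).map_eq

def squash (x : ℝ) : ℝ := x / (1 + |x|)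

lemma continuous_squash : Continuous squash :=
  continuous_id.div (continuous_const.add continuous_abs) fun x => by positivity

lemma abs_squash_le_one (x : ℝ) : |squash x| ≤ 1 := by
  rw [squash, abs_div, abs_of_pos (by positivity : (0 : ℝ) < 1 + |x|), div_le_one (by positivity)]
  linarith

lemma mul_squash_eq (x : ℝ) : x * squash x = x ^ 2 / (1 + |x|) := by
  rw [squash, ← mul_div_assoc, sq]

def centeredSquash (μ : Measure ℝ) (x : ℝ) : ℝ := (squash x - ∫ y, squash y ∂μ) / 2

lemma measurable_centeredSquash {μ : Measure ℝ} : Measurable (centeredSquash μ) :=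
  ((continuous_squash.sub continuous_const).div_const 2).measurable

section CenteredSquash

variable {μ : Measure ℝ} [IsProbabilityMeasure μ]

lemma integrable_squash : Integrable squash μ :=
  .of_bound continuous_squash.aestronglyMeasurable 1 (.of_forall abs_squash_le_one)

lemma abs_centeredSquash_le_one (x : ℝ) : |centeredSquash μ x| ≤ 1 := by
  have hmean : |∫ y, squash y ∂μ| ≤ 1 := by
    simpa using norm_integral_le_of_norm_le_const (μ := μ) (f := squash)
      (.of_forall abs_squash_le_one)
  rw [centeredSquash, abs_div, abs_two, div_le_one two_pos]
  linarith [abs_sub (squash x) (∫ y, squash y ∂μ), abs_squash_le_one x]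

lemma integral_centeredSquash : ∫ x, centeredSquash μ x ∂μ = 0 := by
  simp only [centeredSquash]
  rw [integral_div, integral_sub integrable_squash (integrable_const _), integral_const]
  simp

lemma integral_mul_centeredSquash_pos (hμ : Integrable (fun x => x) μ) (hmean : ∫ x, x ∂μ = 0)
    (hμ0 : μ ≠ Measure.dirac 0) : 0 < ∫ x, x * centeredSquash μ x ∂μ := by
  have hint : Integrable (fun x => x * squash x) μ :=
    hμ.mul_bdd continuous_squash.aestronglyMeasurable (.of_forall abs_squash_le_one)
  have hpos : 0 < ∫ x, x * squash x ∂μ :=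
    integral_pos_of_ne_dirac_zero hint (fun x => by simp only [mul_squash_eq]; positivity)
      (fun x hx => by rw [mul_squash_eq]; positivity) hμ0
  have hsplit : ∀ x, x * centeredSquash μ x = (x * squash x - (∫ y, squash y ∂μ) * x) / 2 :=
    fun x => by rw [centeredSquash]; ring
  simp_rw [hsplit]
  rw [integral_div, integral_sub hint (hμ.const_mul _), integral_const_mul, hmean]
  linarith

end CenteredSquash

theorem stmt10 (μ ν : Measure ℝ) [IsProbabilityMeasure μ] [IsProbabilityMeasure ν]
    (hμ : Integrable (fun x => x ^ 2) μ) (hν : Integrable (fun y => y ^ 2) ν)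
    (hmμ : ∫ x, x ∂μ = 0) (hmν : ∫ y, y ∂ν = 0)
    (hμ0 : μ ≠ Measure.dirac 0) (hν0 : ν ≠ Measure.dirac 0) :
    W2sq μ ν < ENNReal.ofReal ((∫ x, x ^ 2 ∂μ) + ∫ y, y ^ 2 ∂ν) := by
  set σ := perturbedProd μ ν (centeredSquash μ) (centeredSquash ν)
  have hσ : σ ∈ Couplings μ ν :=
    ⟨map_fst_perturbedProd measurable_centeredSquash measurable_centeredSquash
      abs_centeredSquash_le_one abs_centeredSquash_le_one integral_centeredSquash,
     map_snd_perturbedProd measurable_centeredSquash measurable_centeredSquash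
      abs_centeredSquash_le_one abs_centeredSquash_le_one integral_centeredSquash⟩
  have hcorr : 0 < ∫ p, p.1 * p.2 ∂σ := by
    rw [integral_mul_perturbedProd (integrable_of_integrable_sq hμ)
      (integrable_of_integrable_sq hν) measurable_centeredSquash measurable_centeredSquash
      abs_centeredSquash_le_one abs_centeredSquash_le_one, hmμ, hmν, zero_mul, zero_add]
    exact mul_pos
      (integral_mul_centeredSquash_pos (integrable_of_integrable_sq hμ) hmμ hμ0)
      (integral_mul_centeredSquash_pos (integrable_of_integrable_sq hν) hmν hν0)
  have hsecond : 0 < (∫ x, x ^ 2 ∂μ) + ∫ y, y ^ 2 ∂ν :=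
    add_pos_of_pos_of_nonneg
      (integral_pos_of_ne_dirac_zero hμ (fun x => sq_nonneg x) (fun x hx => by positivity) hμ0)
      (integral_nonneg fun y => sq_nonneg y)
  calc W2sq μ ν ≤ ∫⁻ p, ENNReal.ofReal (‖p.1 - p.2‖ ^ 2) ∂σ := iInf₂_le σ hσ
    _ = ENNReal.ofReal ((∫ x, x ^ 2 ∂μ) + (∫ y, y ^ 2 ∂ν) - 2 * ∫ p, p.1 * p.2 ∂σ) :=
      lintegral_sq_sub_eq_of_mem_couplings hσ hμ hν
    _ < _ := (ENNReal.ofReal_lt_ofReal_iff hsecond).2 (by linarith)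

end
end
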